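/- arXiv:2406.01473 — 5 statements merged into one kernel-verified Lean document; each statement's English description precedes it below -/
import Mathlib

section
/- Let u : ℝ → ℝ be continuously differentiable on [0,1]. Then ∫₀¹ u(y)⁴ dy ≤ ( ∫₀¹ u(y)² dy + 2·(∫₀¹ u(y)² dy)^{1/2} · (∫₀¹ u'(y)² dy)^{1/2} )². -/
/-!
By the mean value theorem for integrals, `u c ^ 2 = ∫₀¹ u²` at some `c`. Integrating `(u²)' = 2uu'`
from `c` and applying Cauchy–Schwarz bounds `u²` everywhere by `M = ∫₀¹ u² + 2 ‖u‖₂ ‖u'‖₂`, so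
`∫₀¹ u⁴ ≤ M ∫₀¹ u² ≤ M²`.
-/

open MeasureTheory Set

theorem exists_mul_eq_intervalIntegral {f : ℝ → ℝ} {a b : ℝ} (hab : a < b)
    (hf : ContinuousOn f (Icc a b)) : ∃ c ∈ Icc a b, (b - a) * f c = ∫ x in a..b, f x := by
  rw [← uIcc_of_le hab.le] at hf
  obtain ⟨c, hc, h⟩ := exists_eq_interval_average hab.ne hf
  rw [uIoo_of_le hab.le] at hc
  refine ⟨c, Ioo_subset_Icc_self hc, ?_⟩
  rw [h, interval_average_eq_div]
  field_simp [sub_ne_zero.2 hab.ne']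

theorem sq_le_sq_add_two_mul_integral_abs_mul {u u' : ℝ → ℝ} {a b : ℝ} (hab : a ≤ b)
    (hderiv : ∀ x ∈ Icc a b, HasDerivAt u (u' x) x) (hcont : ContinuousOn u' (Icc a b))
    {x y : ℝ} (hx : x ∈ Icc a b) (hy : y ∈ Icc a b) :
    u x ^ 2 ≤ u y ^ 2 + 2 * ∫ t in a..b, |u t * u' t| := by
  have hu : ContinuousOn u (Icc a b) := fun t ht => (hderiv t ht).continuousAt.continuousWithinAt
  have huu' : ContinuousOn (fun t => u t * u' t) (Icc a b) := hu.mul hcont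
  have hsub : uIcc y x ⊆ Icc a b := uIcc_subset_Icc hy hx
  have hftc : ∫ t in y..x, 2 * (u t * u' t) = u x ^ 2 - u y ^ 2 :=
    intervalIntegral.integral_eq_sub_of_hasDerivAt
      (fun t ht => by simpa [mul_assoc] using (hderiv t (hsub ht)).pow 2)
      ((huu'.mono hsub).intervalIntegrable.const_mul 2)
  have hmono : |∫ t in y..x, u t * u' t| ≤ ∫ t in a..b, |u t * u' t| :=
    calc |∫ t in y..x, u t * u' t| ≤ |∫ t in y..x, (|u t * u' t|)| := by
          simpa only [Real.norm_eq_abs] using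
            intervalIntegral.norm_integral_le_abs_integral_norm (f := fun t => u t * u' t)
      _ ≤ |∫ t in a..b, (|u t * u' t|)| := by
          refine intervalIntegral.abs_integral_mono_interval ?_
            (Filter.Eventually.of_forall fun t => abs_nonneg _) ?_
          · rw [← uIcc_of_le hab] at hsub
            exact uIoc_subset_uIoc_of_uIcc_subset_uIcc hsub
          · exact huu'.abs.intervalIntegrable_of_Icc hab
      _ = ∫ t in a..b, |u t * u' t| :=
          abs_of_nonneg (intervalIntegral.integral_nonneg hab fun t _ => abs_nonneg _)
  rw [intervalIntegral.integral_const_mul] at hftc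
  linarith [le_abs_self (∫ t in y..x, u t * u' t)]

theorem integral_abs_mul_le_sqrt_mul_sqrt {α : Type*} [MeasurableSpace α] {μ : Measure α}
    {f g : α → ℝ} (hf : MemLp f 2 μ) (hg : MemLp g 2 μ) :
    ∫ x, |f x * g x| ∂μ ≤ √(∫ x, f x ^ 2 ∂μ) * √(∫ x, g x ^ 2 ∂μ) := by
  have h := integral_mul_le_Lp_mul_Lq_of_nonneg Real.HolderConjugate.two_two
    (Filter.Eventually.of_forall fun x => abs_nonneg (f x))
    (Filter.Eventually.of_forall fun x => abs_nonneg (g x))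
    (by simpa using hf.norm) (by simpa using hg.norm)
  simpa only [abs_mul, Real.rpow_two, sq_abs, ← Real.sqrt_eq_rpow] using h

theorem intervalIntegral.integral_abs_mul_le_sqrt_mul_sqrt {a b : ℝ} (hab : a ≤ b)
    {f g : ℝ → ℝ} (hf : ContinuousOn f (Icc a b)) (hg : ContinuousOn g (Icc a b)) :
    ∫ x in a..b, |f x * g x| ≤ √(∫ x in a..b, f x ^ 2) * √(∫ x in a..b, g x ^ 2) := by
  have memLp {h : ℝ → ℝ} (hh : ContinuousOn h (Icc a b)) :
      MemLp h 2 (volume.restrict (Ioc a b)) :=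
    (memLp_two_iff_integrable_sq
      ((hh.mono Ioc_subset_Icc_self).aestronglyMeasurable measurableSet_Ioc)).2
      ((hh.pow 2).integrableOn_Icc.mono_set Ioc_subset_Icc_self)
  simp only [intervalIntegral.integral_of_le hab]
  exact _root_.integral_abs_mul_le_sqrt_mul_sqrt (memLp hf) (memLp hg)

/-- Inequality (3.2) of Lemma 3.1: for `u` continuously differentiable on `[0,1]`,
`∫₀¹ u⁴ ≤ (∫₀¹ u² + 2 (∫₀¹ u²)^{1/2} (∫₀¹ (u')²)^{1/2})²`. -/
theorem stmt_1 (u u' : ℝ → ℝ)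
    (hderiv : ∀ x ∈ Icc (0:ℝ) 1, HasDerivAt u (u' x) x)
    (hcont : ContinuousOn u' (Icc (0:ℝ) 1)) :
    (∫ y in (0:ℝ)..1, (u y) ^ 4) ≤
      ((∫ y in (0:ℝ)..1, (u y) ^ 2)
        + 2 * Real.sqrt (∫ y in (0:ℝ)..1, (u y) ^ 2)
            * Real.sqrt (∫ y in (0:ℝ)..1, (u' y) ^ 2)) ^ 2 := by
  have hu : ContinuousOn u (Icc (0:ℝ) 1) := fun x hx =>
    (hderiv x hx).continuousAt.continuousWithinAt
  set A := ∫ y in (0:ℝ)..1, (u y) ^ 2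
  set M := A + 2 * √A * √(∫ y in (0:ℝ)..1, (u' y) ^ 2)
  obtain ⟨c, hc, hcA⟩ := exists_mul_eq_intervalIntegral (f := fun x => u x ^ 2) zero_lt_one
    (hu.pow 2)
  rw [sub_zero, one_mul] at hcA
  have hsup : ∀ x ∈ Icc (0:ℝ) 1, u x ^ 2 ≤ M := fun x hx => by
    have hx_le := sq_le_sq_add_two_mul_integral_abs_mul zero_le_one hderiv hcont hx hc
    have hcs := intervalIntegral.integral_abs_mul_le_sqrt_mul_sqrt zero_le_one hu hcont
    linarith
  have hA : 0 ≤ A := intervalIntegral.integral_nonneg zero_le_one fun x _ => sq_nonneg _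
  calc ∫ y in (0:ℝ)..1, u y ^ 4 ≤ ∫ y in (0:ℝ)..1, M * u y ^ 2 :=
        intervalIntegral.integral_mono_on zero_le_one
          ((hu.pow 4).intervalIntegrable_of_Icc zero_le_one)
          (((hu.pow 2).intervalIntegrable_of_Icc zero_le_one).const_mul M)
          fun x hx => by nlinarith [hsup x hx, sq_nonneg (u x)]
    _ = M * A := intervalIntegral.integral_const_mul M _
    _ ≤ M ^ 2 := by nlinarith [show A ≤ M from le_add_of_nonneg_right (by positivity)]
end

section
/- Let h₀, h₁ ∈ ℝ and for z : ℝ → ℝ continuously differentiable on [0,1] set φ(z) = (1/2)∫₀¹ z'(x)² dx + h₁·z(1) − h₀·z(0). Then ∫₀¹ z'(x)² dx ≤ 4·φ(z) + 2·(|h₀| + |h₁|)² + 6·∫₀¹ z(x)² dx. -/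
open MeasureTheory Set

/-!
Write `A = ∫₀¹ z²` and `E = ∫₀¹ z'²`. Since `(z²)' = 2zz'` and `|2zz'| ≤ 2z² + z'²/2`, the
oscillation of `z²` on `[0,1]` is at most `2A + E/2`; averaging `z(y)² ≤ z(x)² + 2A + E/2`
over `x` gives `z(y)² ≤ 3A + E/2`, in particular at the endpoints. The boundary terms of `φ`
are then absorbed by `4(|h₀| + |h₁|)·max |z(i)| ≤ 2(|h₀| + |h₁|)² + 2·max z(i)²`.
-/

section OnInterval

variable {f f' : ℝ → ℝ} {a b : ℝ}

theorem sub_le_integral_abs_deriv (hf : ∀ x ∈ Icc a b, HasDerivAt f (f' x) x)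
    (hf' : ContinuousOn f' (Icc a b)) {x y : ℝ} (hx : x ∈ Icc a b) (hy : y ∈ Icc a b) :
    f y - f x ≤ ∫ t in a..b, |f' t| := by
  have hsub : uIcc x y ⊆ Icc a b := uIcc_subset_Icc hx hy
  have hint : IntegrableOn (fun t => |f' t|) (Ioc a b) :=
    (hf'.abs.integrableOn_compact isCompact_Icc).mono_set Ioc_subset_Icc_self
  calc f y - f x = ∫ t in x..y, f' t :=
        (intervalIntegral.integral_eq_sub_of_hasDerivAt (fun t ht => hf t (hsub ht))
          ((hf'.mono hsub).intervalIntegrable)).symm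
    _ ≤ ‖∫ t in x..y, f' t‖ := le_abs_self _
    _ ≤ ∫ t in uIoc x y, |f' t| := intervalIntegral.norm_integral_le_integral_norm_uIoc
    _ ≤ ∫ t in Ioc a b, |f' t| :=
        setIntegral_mono_set hint (Filter.Eventually.of_forall fun _ => abs_nonneg _)
          (Filter.Eventually.of_forall (Ioc_subset_Ioc (le_min hx.1 hy.1) (max_le hx.2 hy.2)))
    _ = ∫ t in a..b, |f' t| := (intervalIntegral.integral_of_le (hx.1.trans hx.2)).symm

theorem mul_le_integral_add_mul_integral_abs_deriv
    (hf : ∀ x ∈ Icc a b, HasDerivAt f (f' x) x)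
    (hf' : ContinuousOn f' (Icc a b)) {y : ℝ} (hy : y ∈ Icc a b) :
    (b - a) * f y ≤ (∫ x in a..b, f x) + (b - a) * ∫ t in a..b, |f' t| := by
  have hab : a ≤ b := hy.1.trans hy.2
  have hfc : ContinuousOn f (Icc a b) := fun x hx => (hf x hx).continuousAt.continuousWithinAt
  have hmono : (∫ _ in a..b, f y - ∫ t in a..b, |f' t|) ≤ ∫ x in a..b, f x :=
    intervalIntegral.integral_mono_on hab intervalIntegrable_const
      (hfc.intervalIntegrable_of_Icc hab)
      (fun x hx => by linarith [sub_le_integral_abs_deriv hf hf' hx hy])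
  rw [intervalIntegral.integral_const, smul_eq_mul] at hmono
  linarith

end OnInterval

theorem abs_two_mul_mul_le (u v : ℝ) : |2 * u * v| ≤ 2 * u ^ 2 + v ^ 2 / 2 := by
  rw [abs_mul, abs_mul, abs_two]
  nlinarith [sq_nonneg (2 * |u| - |v|), sq_abs u, sq_abs v]

theorem two_mul_add_mul_abs_le {a b u v M : ℝ} (ha : 0 ≤ a) (hb : 0 ≤ b) (hu : u ^ 2 ≤ M)
    (hv : v ^ 2 ≤ M) : 2 * (a * |u| + b * |v|) ≤ (a + b) ^ 2 + M := by
  have hu' : |u| ≤ √M := Real.abs_le_sqrt hu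
  have hv' : |v| ≤ √M := Real.abs_le_sqrt hv
  have hM : √M ^ 2 = M := Real.sq_sqrt ((sq_nonneg u).trans hu)
  nlinarith [sq_nonneg (a + b - √M), mul_le_mul_of_nonneg_left hu' ha,
    mul_le_mul_of_nonneg_left hv' hb]

theorem sq_le_three_mul_integral_sq_add_integral_deriv_sq {z z' : ℝ → ℝ}
    (hderiv : ∀ x ∈ Icc (0:ℝ) 1, HasDerivAt z (z' x) x)
    (hcont : ContinuousOn z' (Icc (0:ℝ) 1)) {y : ℝ} (hy : y ∈ Icc (0:ℝ) 1) :
    z y ^ 2 ≤ 3 * (∫ x in (0:ℝ)..1, z x ^ 2) + (∫ x in (0:ℝ)..1, z' x ^ 2) / 2 := by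
  have hzc : ContinuousOn z (Icc (0:ℝ) 1) := fun x hx =>
    (hderiv x hx).continuousAt.continuousWithinAt
  have hsq : ∀ x ∈ Icc (0:ℝ) 1, HasDerivAt (fun t => z t ^ 2) (2 * z x * z' x) x :=
    fun x hx => by simpa using (hderiv x hx).fun_pow 2
  have hpoint := mul_le_integral_add_mul_integral_abs_deriv hsq
    ((continuousOn_const.mul hzc).mul hcont) hy
  have hz2 : IntervalIntegrable (fun x => z x ^ 2) volume 0 1 :=
    (hzc.pow 2).intervalIntegrable_of_Icc zero_le_one
  have hz'2 : IntervalIntegrable (fun x => z' x ^ 2) volume 0 1 :=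
    (hcont.pow 2).intervalIntegrable_of_Icc zero_le_one
  have habs : (∫ t in (0:ℝ)..1, |2 * z t * z' t|)
      ≤ 2 * (∫ x in (0:ℝ)..1, z x ^ 2) + (∫ x in (0:ℝ)..1, z' x ^ 2) / 2 := by
    rw [← intervalIntegral.integral_const_mul, ← intervalIntegral.integral_div,
      ← intervalIntegral.integral_add (hz2.const_mul 2) (hz'2.div_const 2)]
    exact intervalIntegral.integral_mono_on zero_le_one
      (((continuousOn_const.mul hzc).mul hcont).abs.intervalIntegrable_of_Icc zero_le_one)
      ((hz2.const_mul 2).add (hz'2.div_const 2)) (fun x _ => abs_two_mul_mul_le _ _)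
  rw [sub_zero, one_mul, one_mul] at hpoint
  linarith

/-- Coercivity estimate (3.4): for `φ(z) = (1/2)∫₀¹ (z')² + h₁ z(1) − h₀ z(0)`,
`∫₀¹ (z')² ≤ 4 φ(z) + 2(|h₀| + |h₁|)² + 6 ∫₀¹ z²`. -/
theorem stmt_10 (h0 h1 : ℝ) (z z' : ℝ → ℝ)
    (hderiv : ∀ x ∈ Icc (0:ℝ) 1, HasDerivAt z (z' x) x)
    (hcont : ContinuousOn z' (Icc (0:ℝ) 1)) :
    (∫ x in (0:ℝ)..1, (z' x) ^ 2) ≤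
      4 * ((1 / 2) * (∫ x in (0:ℝ)..1, (z' x) ^ 2) + h1 * z 1 - h0 * z 0)
        + 2 * (|h0| + |h1|) ^ 2 + 6 * (∫ x in (0:ℝ)..1, (z x) ^ 2) := by
  have hboundary := two_mul_add_mul_abs_le (abs_nonneg h0) (abs_nonneg h1)
    (sq_le_three_mul_integral_sq_add_integral_deriv_sq hderiv hcont (left_mem_Icc.2 zero_le_one))
    (sq_le_three_mul_integral_sq_add_integral_deriv_sq hderiv hcont (right_mem_Icc.2 zero_le_one))
  have h0z0 : h0 * z 0 ≤ |h0| * |z 0| := abs_mul h0 (z 0) ▸ le_abs_self _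
  have h1z1 : -(|h1| * |z 1|) ≤ h1 * z 1 := abs_mul h1 (z 1) ▸ neg_abs_le _
  linarith
end

section
/- Let h₀, h₁ ∈ ℝ, r > 0, and let z : ℝ → ℝ be continuously differentiable on [0,1] with (∫₀¹ z(x)² dx)^{1/2} ≤ r. Set φ(z) = (1/2)∫₀¹ z'(x)² dx + h₁·z(1) − h₀·z(0). Then |z(0)| + |z(1)| ≤ (4√2·r + 2√2 + 16·(|h₀| + |h₁|))·(|φ(z)| + 1). -/
open MeasureTheory Set

set_option maxHeartbeats 1000000 in
/-- Boundary-value estimate (3.5): if `(∫₀¹ z²)^{1/2} ≤ r` and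
`φ(z) = (1/2)∫₀¹ (z')² + h₁ z(1) − h₀ z(0)`, then
`|z(0)| + |z(1)| ≤ (4√2 r + 2√2 + 16(|h₀| + |h₁|))(|φ(z)| + 1)`. -/
theorem stmt_11 (h0 h1 r : ℝ) (hr : 0 < r) (z z' : ℝ → ℝ)
    (hderiv : ∀ x ∈ Icc (0:ℝ) 1, HasDerivAt z (z' x) x)
    (hcont : ContinuousOn z' (Icc (0:ℝ) 1))
    (hz : Real.sqrt (∫ x in (0:ℝ)..1, (z x) ^ 2) ≤ r) :
    |z 0| + |z 1| ≤
      (4 * Real.sqrt 2 * r + 2 * Real.sqrt 2 + 16 * (|h0| + |h1|)) *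
        (|(1 / 2) * (∫ x in (0:ℝ)..1, (z' x) ^ 2) + h1 * z 1 - h0 * z 0| + 1) := by
  set D := ∫ x in (0:ℝ)..1, (z' x)^2 with hDdef
  have hzc : ContinuousOn z (Icc (0:ℝ) 1) := fun x hx =>
    (hderiv x hx).continuousAt.continuousWithinAt
  have hsub : ∀ a b : ℝ, a ∈ Icc (0:ℝ) 1 → b ∈ Icc (0:ℝ) 1 → uIcc a b ⊆ Icc (0:ℝ) 1 := by
    intro a b ha hb
    rw [uIcc]
    exact Icc_subset_Icc (le_min ha.1 hb.1) (max_le ha.2 hb.2)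
  have hz'int : ∀ a b : ℝ, a ∈ Icc (0:ℝ) 1 → b ∈ Icc (0:ℝ) 1 →
      IntervalIntegrable z' volume a b := fun a b ha hb =>
    (hcont.mono (hsub a b ha hb)).intervalIntegrable
  have hz'sqint : ∀ a b : ℝ, a ∈ Icc (0:ℝ) 1 → b ∈ Icc (0:ℝ) 1 →
      IntervalIntegrable (fun x => (z' x)^2) volume a b := fun a b ha hb =>
    (((hcont.mono (hsub a b ha hb))).pow 2).intervalIntegrable
  have hDsub : ∀ a b : ℝ, a ∈ Icc (0:ℝ) 1 → b ∈ Icc (0:ℝ) 1 → a ≤ b →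
      (∫ x in a..b, (z' x)^2) ≤ D := by
    intro a b ha hb hab
    apply intervalIntegral.integral_mono_interval ha.1 hab hb.2
    · filter_upwards with x using sq_nonneg _
    · exact hz'sqint 0 1 (by simp) (by simp)
  have hD0 : 0 ≤ D := by
    rw [hDdef]; apply intervalIntegral.integral_nonneg (by norm_num)
    intro x _; positivity
  -- min point
  obtain ⟨x₀, hx₀, hmin⟩ := isCompact_Icc.exists_isMinOn (nonempty_Icc.2 (by norm_num))
    ((hzc.pow 2) : ContinuousOn (fun x => (z x)^2) (Icc 0 1))
  have hA : (∫ x in (0:ℝ)..1, (z x)^2) ≤ r^2 := by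
    have h0' : 0 ≤ ∫ x in (0:ℝ)..1, (z x)^2 :=
      intervalIntegral.integral_nonneg (by norm_num) (fun x _ => sq_nonneg _)
    nlinarith [Real.sq_sqrt h0', Real.sqrt_nonneg (∫ x in (0:ℝ)..1, (z x)^2)]
  have hx₀r : |z x₀| ≤ r := by
    have h1' : (z x₀)^2 = ∫ x in (0:ℝ)..1, (z x₀)^2 := by simp
    have h2' : (∫ x in (0:ℝ)..1, (z x₀)^2) ≤ ∫ x in (0:ℝ)..1, (z x)^2 := by
      apply intervalIntegral.integral_mono_on (by norm_num) intervalIntegrable_const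
        ((hzc.pow 2).mono (hsub 0 1 (by simp) (by simp))).intervalIntegrable
      intro x hx; exact hmin hx
    have h3' : (z x₀)^2 ≤ r^2 := by linarith
    nlinarith [abs_nonneg (z x₀), sq_abs (z x₀)]
  -- FTC bound
  have key : ∀ a b : ℝ, a ∈ Icc (0:ℝ) 1 → b ∈ Icc (0:ℝ) 1 → a ≤ b →
      |z b - z a| ≤ Real.sqrt D := by
    intro a b ha hb hab
    apply le_of_forall_pos_le_add
    intro ε hε
    set t := Real.sqrt D + ε with ht
    have ht0 : 0 < t := by positivity
    have hDt : D ≤ t^2 := by nlinarith [Real.sq_sqrt hD0, Real.sqrt_nonneg D]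
    have hftc : ∫ x in a..b, z' x = z b - z a := by
      apply intervalIntegral.integral_eq_sub_of_hasDerivAt
      · intro x hx; exact hderiv x (hsub a b ha hb hx)
      · exact hz'int a b ha hb
    rw [← hftc]
    calc |∫ x in a..b, z' x| ≤ ∫ x in a..b, |z' x| :=
          intervalIntegral.abs_integral_le_integral_abs hab
      _ ≤ ∫ x in a..b, ((z' x)^2 + t^2)/(2*t) := by
          apply intervalIntegral.integral_mono_on hab
          · exact ((hcont.mono (hsub a b ha hb)).abs).intervalIntegrable
          · exact (((hcont.mono (hsub a b ha hb)).pow 2).add continuousOn_const).div_const _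
              |>.intervalIntegrable
          · intro x hx
            rw [le_div_iff₀ (by positivity)]
            nlinarith [sq_abs (z' x), sq_nonneg (|z' x| - t), abs_nonneg (z' x)]
      _ = ((∫ x in a..b, ((z' x)^2 + t^2))) / (2*t) := by
          rw [intervalIntegral.integral_div]
      _ = ((∫ x in a..b, (z' x)^2) + (b-a)*t^2)/(2*t) := by
          rw [intervalIntegral.integral_add (hz'sqint a b ha hb) intervalIntegrable_const,
            intervalIntegral.integral_const, smul_eq_mul]
      _ ≤ (t^2 + 1*t^2)/(2*t) := by
          have hb1 : (∫ x in a..b, (z' x)^2) ≤ t^2 := (hDsub a b ha hb hab).trans hDt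
          have hb2 : b - a ≤ 1 := by
            have := ha.1; have := hb.2; linarith
          gcongr
      _ = t := by field_simp; ring
      _ = Real.sqrt D + ε := ht
  -- endpoint bounds
  set s := Real.sqrt D with hsdef
  have hs0 : 0 ≤ s := Real.sqrt_nonneg _
  have hsD : s^2 = D := Real.sq_sqrt hD0
  have hz0 : |z 0| ≤ r + s := by
    have h1' := key 0 x₀ (by constructor <;> norm_num) hx₀ hx₀.1
    have h2' := abs_sub_abs_le_abs_sub (z 0) (z x₀)
    rw [abs_sub_comm] at h2'
    linarith
  have hz1 : |z 1| ≤ r + s := by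
    have h1' := key x₀ 1 hx₀ (by constructor <;> norm_num) hx₀.2
    have h2' := abs_sub_abs_le_abs_sub (z 1) (z x₀)
    linarith
  set P := |(1/2) * D + h1 * z 1 - h0 * z 0| with hPdef
  have hP0 : 0 ≤ P := abs_nonneg _
  set H := |h0| + |h1| with hHdef
  have hH0 : 0 ≤ H := by positivity
  have hDP : D ≤ 2*P + 2*H*(r+s) := by
    have b0 : h0 * z 0 ≤ |h0| * (r+s) := by
      calc h0 * z 0 ≤ |h0 * z 0| := le_abs_self _
        _ = |h0| * |z 0| := abs_mul _ _
        _ ≤ |h0| * (r+s) := mul_le_mul_of_nonneg_left hz0 (abs_nonneg _)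
    have b1 : -(h1 * z 1) ≤ |h1| * (r+s) := by
      calc -(h1 * z 1) ≤ |h1 * z 1| := neg_le_abs _
        _ = |h1| * |z 1| := abs_mul _ _
        _ ≤ |h1| * (r+s) := mul_le_mul_of_nonneg_left hz1 (abs_nonneg _)
    have bP : (1/2) * D + h1 * z 1 - h0 * z 0 ≤ P := le_abs_self _
    nlinarith [mul_nonneg (abs_nonneg h0) hs0, mul_nonneg (abs_nonneg h1) hs0]
  set c := Real.sqrt 2 with hcdef
  have hc2 : c^2 = 2 := Real.sq_sqrt (by norm_num)
  have hc1 : 1 ≤ c := by nlinarith [Real.sqrt_nonneg 2]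
  have hc0 : (0:ℝ) ≤ c := by linarith
  clear hderiv hcont hz hzc hsub hz'int hz'sqint hDsub hA hx₀r hmin key
  clear hDdef hsdef hPdef hcdef hHdef
  clear_value c H P s D
  have hq2 : (c*(P+1)/2)^2 = (P+1)^2/2 := by
    have e : (c*(P+1)/2)^2 = c^2*(P+1)^2/4 := by ring
    rw [e, hc2]; ring
  have hq0 : 0 ≤ c*(P+1)/2 := by positivity
  -- bound on s
  have hB2 : 2*H*(3*H + r/2 + c*(P+1)/2) + 2*H*r + 2*P ≤ (3*H + r/2 + c*(P+1)/2)^2 := by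
    nlinarith [hq2, sq_nonneg (P-1), mul_nonneg hH0 hr.le, sq_nonneg H,
      sq_nonneg r, mul_nonneg hH0 hq0, mul_nonneg hr.le hq0]
  have hside : 0 ≤ s + (3*H + r/2 + c*(P+1)/2) - 2*H := by
    have : 0 ≤ c*(P+1) := mul_nonneg hc0 (by linarith)
    linarith
  have hsB : s ≤ 3*H + r/2 + c*(P+1)/2 := by
    nlinarith [hB2, hside, hDP, hsD]
  -- conclude
  have final : 3*r + 6*H + c*(P+1) ≤ (4*c*r + 2*c + 16*H)*(P+1) := by
    nlinarith [mul_nonneg (mul_nonneg hc0 hr.le) hP0, mul_nonneg hH0 hP0,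
      mul_nonneg (sub_nonneg.2 hc1) hr.le, mul_nonneg (sub_nonneg.2 hc1) hP0,
      mul_nonneg hc0 hP0]
  linarith
end

section
/- Let w : ℝ → ℝ be twice continuously differentiable on [0,1], and suppose |w(x)| ≤ M for all x ∈ [0,1] and |w'(0)| ≤ K, |w'(1)| ≤ K, with M, K ≥ 0. Then ∫₀¹ w'(x)⁴ dx ≤ 4·K³·M + 9·M²·∫₀¹ w''(x)² dx. -/
open MeasureTheory Set

/-- First estimate of Lemma 4.4 (inequality (4.8), first part): for `w` twice continuously
differentiable on `[0,1]` with `|w| ≤ M` on `[0,1]` and `|w'(0)|, |w'(1)| ≤ K`,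
`∫₀¹ (w')⁴ ≤ 4K³M + 9M² ∫₀¹ (w'')²`. -/
theorem stmt_14 (w w' w'' : ℝ → ℝ) (M K : ℝ) (hM : 0 ≤ M) (hK : 0 ≤ K)
    (hderiv : ∀ x ∈ Icc (0:ℝ) 1, HasDerivAt w (w' x) x)
    (hderiv' : ∀ x ∈ Icc (0:ℝ) 1, HasDerivAt w' (w'' x) x)
    (hcont : ContinuousOn w'' (Icc (0:ℝ) 1))
    (hwM : ∀ x ∈ Icc (0:ℝ) 1, |w x| ≤ M)
    (hK0 : |w' 0| ≤ K) (hK1 : |w' 1| ≤ K) :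
    (∫ x in (0:ℝ)..1, (w' x) ^ 4) ≤
      4 * K ^ 3 * M + 9 * M ^ 2 * (∫ x in (0:ℝ)..1, (w'' x) ^ 2) := by
  have h01 : (0:ℝ) ≤ 1 := zero_le_one
  have huIcc : uIcc (0:ℝ) 1 = Icc 0 1 := uIcc_of_le h01
  have hwc : ContinuousOn w (Icc 0 1) := fun x hx =>
    (hderiv x hx).continuousAt.continuousWithinAt
  have hw'c : ContinuousOn w' (Icc 0 1) := fun x hx =>
    (hderiv' x hx).continuousAt.continuousWithinAt
  have hint4 : IntervalIntegrable (fun x => (w' x) ^ 4) volume 0 1 :=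
    ContinuousOn.intervalIntegrable (by rw [huIcc]; exact hw'c.pow 4)
  have hint2 : IntervalIntegrable (fun x => (w'' x) ^ 2) volume 0 1 :=
    ContinuousOn.intervalIntegrable (by rw [huIcc]; exact hcont.pow 2)
  have hfc : ContinuousOn (fun x => (3:ℝ) * (w' x) ^ 2 * w'' x) (Icc 0 1) :=
    ((continuousOn_const.mul (hw'c.pow 2)).mul hcont)
  have hintf : IntervalIntegrable (fun x => (3:ℝ) * (w' x) ^ 2 * w'' x) volume 0 1 :=
    ContinuousOn.intervalIntegrable (by rw [huIcc]; exact hfc)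
  have hintw' : IntervalIntegrable w' volume 0 1 :=
    ContinuousOn.intervalIntegrable (by rw [huIcc]; exact hw'c)
  have hintfw : IntervalIntegrable (fun x => ((3:ℝ) * (w' x) ^ 2 * w'' x) * w x) volume 0 1 :=
    ContinuousOn.intervalIntegrable (by rw [huIcc]; exact hfc.mul hwc)
  have hintnfw : IntervalIntegrable (fun x => -(((3:ℝ) * (w' x) ^ 2 * w'' x) * w x)) volume 0 1 :=
    hintfw.neg
  have hintrhs : IntervalIntegrable
      (fun x => (w' x) ^ 4 / 2 + (9/2) * M ^ 2 * (w'' x) ^ 2) volume 0 1 :=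
    (hint4.div_const 2).add ((hint2.const_mul _))
  -- integration by parts
  have ibp := intervalIntegral.integral_mul_deriv_eq_deriv_mul
      (u := fun x => (w' x) ^ 3) (u' := fun x => (3:ℝ) * (w' x) ^ 2 * w'' x)
      (v := w) (v' := w')
      (fun x hx => by
        have := (hderiv' x (huIcc ▸ hx)).pow 3
        norm_num at this
        exact this)
      (fun x hx => hderiv x (huIcc ▸ hx)) hintf hintw'
  have hkey : (∫ x in (0:ℝ)..1, (w' x) ^ 4) =
      (w' 1) ^ 3 * w 1 - (w' 0) ^ 3 * w 0
        - ∫ x in (0:ℝ)..1, ((3:ℝ) * (w' x) ^ 2 * w'' x) * w x := by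
    rw [← ibp]
    apply intervalIntegral.integral_congr
    intro x _
    ring
  -- boundary bounds
  have hb1 : (w' 1) ^ 3 * w 1 ≤ K ^ 3 * M := by
    calc (w' 1) ^ 3 * w 1 ≤ |(w' 1) ^ 3 * w 1| := le_abs_self _
      _ = |w' 1| ^ 3 * |w 1| := by rw [abs_mul, abs_pow]
      _ ≤ K ^ 3 * M :=
        mul_le_mul (pow_le_pow_left₀ (abs_nonneg _) hK1 3) (hwM 1 ⟨h01, le_refl 1⟩)
          (abs_nonneg _) (pow_nonneg hK 3)
  have hb0 : -((w' 0) ^ 3 * w 0) ≤ K ^ 3 * M := by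
    calc -((w' 0) ^ 3 * w 0) ≤ |(w' 0) ^ 3 * w 0| := neg_le_abs _
      _ = |w' 0| ^ 3 * |w 0| := by rw [abs_mul, abs_pow]
      _ ≤ K ^ 3 * M :=
        mul_le_mul (pow_le_pow_left₀ (abs_nonneg _) hK0 3) (hwM 0 ⟨le_refl 0, h01⟩)
          (abs_nonneg _) (pow_nonneg hK 3)
  -- pointwise bound
  have hpt : ∀ x ∈ Icc (0:ℝ) 1,
      -(((3:ℝ) * (w' x) ^ 2 * w'' x) * w x) ≤
        (w' x) ^ 4 / 2 + (9/2) * M ^ 2 * (w'' x) ^ 2 := by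
    intro x hx
    have habs := hwM x hx
    have hc1 : -M ≤ w x := (abs_le.mp habs).1
    have hc2 : w x ≤ M := (abs_le.mp habs).2
    rcases le_total 0 (w'' x) with hb | hb
    · nlinarith [sq_nonneg ((w' x) ^ 2 - 3 * M * w'' x), sq_nonneg (w' x),
        mul_nonneg (mul_nonneg (sq_nonneg (w' x)) hb) (by linarith : (0:ℝ) ≤ M + w x)]
    · nlinarith [sq_nonneg ((w' x) ^ 2 + 3 * M * w'' x), sq_nonneg (w' x),
        mul_nonneg (mul_nonneg (sq_nonneg (w' x)) (by linarith : (0:ℝ) ≤ -w'' x))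
          (by linarith : (0:ℝ) ≤ M - w x)]
  have hmono : (∫ x in (0:ℝ)..1, -(((3:ℝ) * (w' x) ^ 2 * w'' x) * w x)) ≤
      ∫ x in (0:ℝ)..1, ((w' x) ^ 4 / 2 + (9/2) * M ^ 2 * (w'' x) ^ 2) :=
    intervalIntegral.integral_mono_on h01 hintnfw hintrhs hpt
  rw [intervalIntegral.integral_neg] at hmono
  have hsplit : (∫ x in (0:ℝ)..1, ((w' x) ^ 4 / 2 + (9/2) * M ^ 2 * (w'' x) ^ 2)) =
      (∫ x in (0:ℝ)..1, (w' x) ^ 4) / 2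
        + (9/2) * M ^ 2 * (∫ x in (0:ℝ)..1, (w'' x) ^ 2) := by
    rw [intervalIntegral.integral_add (hint4.div_const 2) (hint2.const_mul _),
      intervalIntegral.integral_div, intervalIntegral.integral_const_mul]
  rw [hsplit] at hmono
  linarith [hkey, hb1, hb0, hmono]
end

section
/- Let λ : ℝ → ℝ be continuously differentiable with δ_λ ≤ λ ≤ C_λ and |λ'| ≤ C_λ on ℝ, where 0 < δ_λ ≤ C_λ, let λ̂(u) = ∫₀ᵘ λ(r) dr and let g = λ̂⁻¹ be its inverse. Then: (i) for all a, b ∈ ℝ, |g'(a) − g'(b)| ≤ (C_λ/δ_λ³)·|a − b|; and (ii) for all a, b, α, β ∈ ℝ, (g'(a)·α − g'(b)·β)·(α − β) ≥ (1/C_λ)·(α − β)² − (C_λ/δ_λ³)·|a − b|·|β|·|α − β|. -/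
open MeasureTheory Set

/-- The primitive `λ̂(u) = ∫₀ᵘ λ(r) dr` of `λ`. -/
noncomputable def lamHat (lam : ℝ → ℝ) : ℝ → ℝ := fun u => ∫ r in (0:ℝ)..u, lam r

/-!
Since `λ̂' = λ ≥ δ_λ > 0`, the primitive `λ̂` expands distances by at least `δ_λ`, hence is a
bijection of `ℝ` whose inverse `g` is `δ_λ⁻¹`-Lipschitz and differentiable with
`g' = 1 / (λ ∘ g)`. Then `g'(a) − g'(b) = (λ(g b) − λ(g a)) / (λ(g a) λ(g b))`, whose numerator is
at most `C_λ δ_λ⁻¹ |a − b|` and whose denominator is at least `δ_λ²`; this is (i). For (ii), write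
`(g'(a)α − g'(b)β)(α − β) = g'(a)(α − β)² + (g'(a) − g'(b))β(α − β)` and use `g' ≥ 1/C_λ` and (i).
-/

open Function Filter

section Expanding

variable {f : ℝ → ℝ} {δ : ℝ}

theorem mul_abs_sub_le_abs_sub_of_le_deriv (hf : Differentiable ℝ f) (hf' : ∀ x, δ ≤ deriv f x)
    (x y : ℝ) : δ * |x - y| ≤ |f x - f y| := by
  rcases le_total x y with hxy | hyx
  · rw [abs_sub_comm x, abs_sub_comm (f x), abs_of_nonneg (sub_nonneg.2 hxy)]
    exact (mul_sub_le_image_sub_of_le_deriv hf hf' hxy).trans (le_abs_self _)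
  · rw [abs_of_nonneg (sub_nonneg.2 hyx)]
    exact (mul_sub_le_image_sub_of_le_deriv hf hf' hyx).trans (le_abs_self _)

theorem surjective_of_le_deriv (hδ : 0 < δ) (hf : Differentiable ℝ f)
    (hf' : ∀ x, δ ≤ deriv f x) : Surjective f := by
  have h_top : Tendsto f atTop atTop := by
    refine tendsto_atTop_mono' _ ?_
      (tendsto_atTop_add_const_left _ (f 0) (tendsto_id.const_mul_atTop hδ))
    filter_upwards [eventually_ge_atTop 0] with x hx
    have := mul_sub_le_image_sub_of_le_deriv hf hf' hx
    simp only [id]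
    linarith
  have h_bot : Tendsto f atBot atBot := by
    refine tendsto_atBot_mono' _ ?_
      (tendsto_atBot_add_const_left _ (f 0) (tendsto_id.const_mul_atBot hδ))
    filter_upwards [eventually_le_atBot 0] with x hx
    have := mul_sub_le_image_sub_of_le_deriv hf hf' hx
    simp only [id]
    linarith
  exact hf.continuous.surjective h_top h_bot

theorem abs_invFun_sub_le (hδ : 0 < δ) (hf : Differentiable ℝ f) (hf' : ∀ x, δ ≤ deriv f x)
    (a b : ℝ) : |invFun f a - invFun f b| ≤ δ⁻¹ * |a - b| := by
  have hinv := rightInverse_invFun (surjective_of_le_deriv hδ hf hf')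
  rw [le_inv_mul_iff₀ hδ]
  simpa only [hinv a, hinv b] using
    mul_abs_sub_le_abs_sub_of_le_deriv hf hf' (invFun f a) (invFun f b)

theorem hasDerivAt_invFun_of_le_deriv (hδ : 0 < δ) (hf : Differentiable ℝ f)
    (hf' : ∀ x, δ ≤ deriv f x) (a : ℝ) :
    HasDerivAt (invFun f) (deriv f (invFun f a))⁻¹ a := by
  have hinv := rightInverse_invFun (surjective_of_le_deriv hδ hf hf')
  have hcont : Continuous (invFun f) :=
    (LipschitzWith.of_dist_le' fun a b => by
      simpa only [Real.dist_eq] using abs_invFun_sub_le hδ hf hf' a b).continuous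
  exact HasDerivAt.of_local_left_inverse hcont.continuousAt (hf _).hasDerivAt
    (hδ.trans_le (hf' _)).ne' (Eventually.of_forall hinv)

theorem inv_le_deriv_invFun {C : ℝ} (hδ : 0 < δ) (hf : Differentiable ℝ f)
    (hf' : ∀ x, δ ≤ deriv f x) (hC : ∀ x, deriv f x ≤ C) (a : ℝ) :
    C⁻¹ ≤ deriv (invFun f) a := by
  rw [(hasDerivAt_invFun_of_le_deriv hδ hf hf' a).deriv]
  exact inv_anti₀ (hδ.trans_le (hf' _)) (hC _)

theorem abs_deriv_invFun_sub_le {C : ℝ} (hδ : 0 < δ) (hf : Differentiable ℝ f)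
    (hf' : ∀ x, δ ≤ deriv f x) (hlip : ∀ x y, |deriv f x - deriv f y| ≤ C * |x - y|) (a b : ℝ) :
    |deriv (invFun f) a - deriv (invFun f) b| ≤ C / δ ^ 3 * |a - b| := by
  have hC : 0 ≤ C := by simpa using (abs_nonneg _).trans (hlip 1 0)
  set p := deriv f (invFun f a)
  set q := deriv f (invFun f b)
  have hp : δ ≤ p := hf' _
  have hq : δ ≤ q := hf' _
  have hnum : |q - p| ≤ C * (δ⁻¹ * |a - b|) :=
    calc |q - p| ≤ C * |invFun f b - invFun f a| := hlip _ _
      _ ≤ C * (δ⁻¹ * |b - a|) := by gcongr; exact abs_invFun_sub_le hδ hf hf' b a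
      _ = C * (δ⁻¹ * |a - b|) := by rw [abs_sub_comm]
  rw [(hasDerivAt_invFun_of_le_deriv hδ hf hf' a).deriv,
    (hasDerivAt_invFun_of_le_deriv hδ hf hf' b).deriv,
    inv_sub_inv (hδ.trans_le hp).ne' (hδ.trans_le hq).ne', abs_div,
    abs_of_pos (mul_pos (hδ.trans_le hp) (hδ.trans_le hq))]
  calc |q - p| / (p * q) ≤ C * (δ⁻¹ * |a - b|) / (δ * δ) :=
        div_le_div₀ (by positivity) hnum (by positivity) (mul_le_mul hp hq hδ.le (hδ.le.trans hp))
    _ = C / δ ^ 3 * |a - b| := by field_simp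

end Expanding

theorem le_mul_sub_mul_mul_sub {A B c K α β : ℝ} (hA : c ≤ A) (hAB : |A - B| ≤ K) :
    c * (α - β) ^ 2 - K * |β| * |α - β| ≤ (A * α - B * β) * (α - β) := by
  have hpert : -(K * |β| * |α - β|) ≤ (A - B) * β * (α - β) := by
    refine neg_le_of_abs_le ?_
    rw [abs_mul, abs_mul]
    gcongr
  have hmain : c * (α - β) ^ 2 ≤ A * (α - β) ^ 2 := by gcongr
  linarith

theorem hasDerivAt_lamHat {lam : ℝ → ℝ} (hlam : Continuous lam) (x : ℝ) :
    HasDerivAt (lamHat lam) (lam x) x :=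
  (hlam.integral_hasStrictDerivAt 0 x).hasDerivAt

theorem stmt_18_general (lam : ℝ → ℝ) (δlam Clam : ℝ) (hδ : 0 < δlam)
    (hC1 : ContDiff ℝ 1 lam)
    (hbound : ∀ r : ℝ, δlam ≤ lam r ∧ lam r ≤ Clam)
    (hd : ∀ r : ℝ, |deriv lam r| ≤ Clam) :
    (∀ a b : ℝ,
      |deriv (Function.invFun (lamHat lam)) a - deriv (Function.invFun (lamHat lam)) b| ≤
        (Clam / δlam ^ 3) * |a - b|) ∧
    (∀ a b α β : ℝ,
      (deriv (Function.invFun (lamHat lam)) a * α -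
          deriv (Function.invFun (lamHat lam)) b * β) * (α - β) ≥
        (1 / Clam) * (α - β) ^ 2 - (Clam / δlam ^ 3) * |a - b| * |β| * |α - β|) := by
  have hlam : Continuous lam := hC1.continuous
  have hderiv : deriv (lamHat lam) = lam := funext fun x => (hasDerivAt_lamHat hlam x).deriv
  have hdiff : Differentiable ℝ (lamHat lam) := fun x => (hasDerivAt_lamHat hlam x).differentiableAt
  have hlow : ∀ x, δlam ≤ deriv (lamHat lam) x := by simpa only [hderiv] using fun x => (hbound x).1
  have hlip : ∀ x y, |lam x - lam y| ≤ Clam * |x - y| := fun x y => by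
    simpa only [Real.norm_eq_abs] using convex_univ.norm_image_sub_le_of_norm_deriv_le
      (fun r _ => (hC1.differentiable one_ne_zero) r) (fun r _ => hd r) (mem_univ y) (mem_univ x)
  have hderiv_lip := abs_deriv_invFun_sub_le hδ hdiff hlow (by simpa only [hderiv] using hlip)
  refine ⟨hderiv_lip, fun a b α β => le_mul_sub_mul_mul_sub ?_ (hderiv_lip a b)⟩
  rw [one_div]
  exact inv_le_deriv_invFun hδ hdiff hlow (by simpa only [hderiv] using fun x => (hbound x).2) a

/-- Pointwise estimates from the proof of Lemma 4.6 for `g = λ̂⁻¹`: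
(i) `|g'(a) − g'(b)| ≤ (C_λ/δ_λ³)|a − b|`; and
(ii) `(g'(a)α − g'(b)β)(α − β) ≥ (1/C_λ)(α − β)² − (C_λ/δ_λ³)|a − b||β||α − β|`. -/
theorem stmt_18 (lam : ℝ → ℝ) (δlam Clam : ℝ) (hδ : 0 < δlam) (hδC : δlam ≤ Clam)
    (hC1 : ContDiff ℝ 1 lam)
    (hbound : ∀ r : ℝ, δlam ≤ lam r ∧ lam r ≤ Clam)
    (hd : ∀ r : ℝ, |deriv lam r| ≤ Clam) :
    (∀ a b : ℝ,
      |deriv (Function.invFun (lamHat lam)) a - deriv (Function.invFun (lamHat lam)) b| ≤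
        (Clam / δlam ^ 3) * |a - b|) ∧
    (∀ a b α β : ℝ,
      (deriv (Function.invFun (lamHat lam)) a * α -
          deriv (Function.invFun (lamHat lam)) b * β) * (α - β) ≥
        (1 / Clam) * (α - β) ^ 2 - (Clam / δlam ^ 3) * |a - b| * |β| * |α - β|) :=
  stmt_18_general lam δlam Clam hδ hC1 hbound hd
end
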